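/- For every u ∈ L^p(ℝⁿ₊) and every v ∈ L^q(ℝⁿ₊), where 1/p + 1/q = 1, one has ∫_{ℝⁿ₊} (R_s ⊗ S_s)u(x) v(x) dx → 0 as s → ∞; that is, (R_s ⊗ S_s)u converges to 0 in the weak topology of L^p(ℝⁿ₊). -/

import Mathlib

/-!
Statement 12: For every u ∈ L^p(ℝⁿ₊) and every v ∈ L^q(ℝⁿ₊), 1/p + 1/q = 1,
∫_{ℝⁿ₊} (R_s ⊗ S_s)u · v → 0 as s → ∞, i.e. (R_s ⊗ S_s)u → 0 weakly in L^p(ℝⁿ₊),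
where (R_s ⊗ S_s)u(x', x_n) = s^{τ(n−1)/p + 1/p} e^{i s x'·η} u(s^τ(x' − y), s x_n)
and ℝⁿ₊ is modeled as ℝ^k × (0,∞), k = n − 1.
-/

open MeasureTheory Real Complex Filter Topology ENNReal

noncomputable section

abbrev En (k : ℕ) := EuclideanSpace ℝ (Fin k)

/-- The operator `R_s ⊗ S_s` on functions on the half space `ℝ^k × ℝ₊`. -/
def RSop (k : ℕ) (p τ : ℝ) (y η : En k) (s : ℝ) (u : En k × ℝ → ℂ) : En k × ℝ → ℂ :=
  fun q => ((s ^ (τ * k / p + 1 / p) : ℝ) : ℂ) *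
    Complex.exp (Complex.I * (s : ℂ) * ((inner ℝ q.1 η : ℝ) : ℂ)) *
    u ((s ^ τ : ℝ) • (q.1 - y), s * q.2)

/-!
The mass of `(R_s ⊗ S_s)u` escapes to the boundary `x_n = 0`: the operator is an isometry of
`L^p(ℝⁿ₊)` carrying the part of `u` above height `s δ` onto the part of `(R_s ⊗ S_s)u` above
height `δ`. Splitting the pairing at height `δ` and applying Hölder to each piece gives
`|⟨(R_s ⊗ S_s)u, v⟩| ≤ ‖u‖_p ‖v‖_{L^q(0 < x_n ≤ δ)} + ‖u‖_{L^p(x_n > s δ)} ‖v‖_q`.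
By dominated convergence the first term is small for small `δ`, and for fixed `δ` the second
tends to `0` as `s → ∞`.
-/

section Lp

variable {α : Type*} [MeasurableSpace α]

theorem MeasureTheory.MemLp.tendsto_eLpNorm_restrict_zero {E : Type*} [NormedAddCommGroup E]
    {μ : Measure α} {p : ℝ≥0∞} {f : α → E} (hf : MemLp f p μ) (hp : p ≠ ∞)
    {ι : Type*} {l : Filter ι} [l.IsCountablyGenerated] {S : ι → Set α}
    (hS : ∀ i, MeasurableSet (S i)) (h : ∀ᵐ x ∂μ, ∀ᶠ i in l, x ∉ S i) :
    Tendsto (fun i => eLpNorm f p (μ.restrict (S i))) l (𝓝 0) := by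
  rcases eq_or_ne p 0 with rfl | hp0
  · simpa using tendsto_const_nhds
  have hlint : Tendsto (fun i => ∫⁻ x in S i, ‖f x‖ₑ ^ p.toReal ∂μ) l (𝓝 0) := by
    simp_rw [← lintegral_indicator (hS _)]
    simpa using tendsto_lintegral_filter_of_dominated_convergence' (fun x => ‖f x‖ₑ ^ p.toReal)
      (.of_forall fun i => (hf.1.enorm.pow_const _).indicator (hS i))
      (.of_forall fun i => ae_of_all _ fun x => Set.indicator_le_self _ _ x)
      (lintegral_rpow_enorm_lt_top_of_eLpNorm_lt_top hp0 hp hf.2).ne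
      (h.mono fun x hx => tendsto_const_nhds.congr'
        (hx.mono fun i hi => (Set.indicator_of_notMem hi _).symm))
  have hrpow : Tendsto (fun t : ℝ≥0∞ => t ^ (1 / p.toReal)) (𝓝 0) (𝓝 0) := by
    simpa [ENNReal.toReal_pos hp0 hp] using
      (ENNReal.continuous_rpow_const (y := 1 / p.toReal)).tendsto 0
  simp_rw [eLpNorm_eq_lintegral_rpow_enorm_toReal hp0 hp]
  exact hrpow.comp hlint

theorem MeasureTheory.lintegral_enorm_mul_le_eLpNorm_mul_eLpNorm {𝕜 : Type*} [NormedRing 𝕜]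
    {μ : Measure α} {P Q : ℝ≥0∞} [P.HolderConjugate Q] {f g : α → 𝕜}
    (hf : AEStronglyMeasurable f μ) (hg : AEStronglyMeasurable g μ) :
    ∫⁻ x, ‖f x * g x‖ₑ ∂μ ≤ eLpNorm f P μ * eLpNorm g Q μ := by
  simpa [eLpNorm_one_eq_lintegral_enorm] using
    eLpNorm_smul_le_mul_eLpNorm (p := P) (q := Q) (r := 1) hg hf

theorem MeasureTheory.Measure.map_restrict_preimage_of_map_eq_smul {β : Type*}
    [MeasurableSpace β] {μ : Measure α} {ν : Measure β} {T : α → β} {c : ℝ≥0∞}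
    (hT : Measurable T) (hμν : μ.map T = c • ν) {B : Set β} (hB : MeasurableSet B) :
    (μ.restrict (T ⁻¹' B)).map T = c • ν.restrict B := by
  rw [← Measure.restrict_map hT hB, hμν, Measure.restrict_smul]

theorem MeasureTheory.eLpNorm_comp_restrict_preimage_of_map_eq_smul {β E : Type*}
    [MeasurableSpace β] [NormedAddCommGroup E] {μ : Measure α} {ν : Measure β} {T : α → β}
    {c : ℝ≥0∞} (hT : Measurable T) (hμν : μ.map T = c • ν) {B : Set β} (hB : MeasurableSet B)
    {g : β → E} (hg : AEStronglyMeasurable g (ν.restrict B)) {p : ℝ≥0∞} (hp : p ≠ ∞) :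
    eLpNorm (g ∘ T) p (μ.restrict (T ⁻¹' B)) = c ^ (1 / p).toReal * eLpNorm g p (ν.restrict B) := by
  have hmap := Measure.map_restrict_preimage_of_map_eq_smul hT hμν hB
  rw [← eLpNorm_map_measure (hmap ▸ hg.smul_measure c) hT.aemeasurable, hmap,
    eLpNorm_smul_measure_of_ne_top hp, smul_eq_mul]

theorem MeasureTheory.AEStronglyMeasurable.comp_restrict_preimage_of_map_eq_smul {β E : Type*}
    [MeasurableSpace β] [TopologicalSpace E] {μ : Measure α} {ν : Measure β} {T : α → β}
    {c : ℝ≥0∞} (hT : Measurable T) (hμν : μ.map T = c • ν) {B : Set β} (hB : MeasurableSet B)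
    {g : β → E} (hg : AEStronglyMeasurable g (ν.restrict B)) :
    AEStronglyMeasurable (g ∘ T) (μ.restrict (T ⁻¹' B)) :=
  (Measure.map_restrict_preimage_of_map_eq_smul hT hμν hB ▸ hg.smul_measure c).comp_measurable hT

end Lp

theorem ENNReal.tendsto_atTop_zero_of_le_add_comp_mul {f a b : ℝ → ℝ≥0∞}
    (ha : Tendsto a (𝓝[>] 0) (𝓝 0)) (hb : Tendsto b atTop (𝓝 0))
    (h : ∀ s > 0, ∀ δ > 0, f s ≤ a δ + b (s * δ)) : Tendsto f atTop (𝓝 0) := by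
  rw [ENNReal.tendsto_nhds_zero]
  intro ε hε
  have hε2 : 0 < ε / 2 := ENNReal.half_pos hε.ne'
  obtain ⟨δ, haδ, hδ⟩ :=
    ((ENNReal.tendsto_nhds_zero.1 ha _ hε2).and self_mem_nhdsWithin).exists
  have hbs : ∀ᶠ s in atTop, b (s * δ) ≤ ε / 2 :=
    (tendsto_id.atTop_mul_const hδ).eventually (ENNReal.tendsto_nhds_zero.1 hb _ hε2)
  filter_upwards [hbs, eventually_gt_atTop 0] with s hbs hs
  calc f s ≤ a δ + b (s * δ) := h s hs δ hδ
    _ ≤ ε / 2 + ε / 2 := add_le_add haδ hbs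
    _ = ε := ENNReal.add_halves ε

theorem MeasureTheory.Measure.map_smul_sub_prod_mul {E : Type*} [NormedAddCommGroup E]
    [NormedSpace ℝ E] [MeasurableSpace E] [BorelSpace E] [FiniteDimensional ℝ E]
    (μ : Measure E) [μ.IsAddHaarMeasure] {r s : ℝ} (hr : r ≠ 0) (hs : s ≠ 0) (y : E) :
    (μ.prod volume).map (fun x : E × ℝ => (r • (x.1 - y), s * x.2)) =
      ENNReal.ofReal (|(r ^ Module.finrank ℝ E)⁻¹| * |s⁻¹|) • μ.prod volume := by
  have hdil : μ.map (fun x => r • (x - y)) = ENNReal.ofReal |(r ^ Module.finrank ℝ E)⁻¹| • μ := by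
    rw [← Measure.map_addHaar_smul μ hr, ← map_add_right_eq_self μ (-y),
      Measure.map_map (measurable_const_smul r) (measurable_add_const _)]
    simp only [map_add_right_eq_self, Function.comp_def, sub_eq_add_neg]
  have hmeas : Measurable fun x : E => r • (x - y) := by fun_prop
  rw [show (fun x : E × ℝ => (r • (x.1 - y), s * x.2)) = Prod.map (fun x => r • (x - y)) (s * ·)
      from rfl, ← Measure.map_prod_map _ _ hmeas (measurable_const_mul s), hdil,
    Real.map_volume_mul_left hs, Measure.prod_smul_left, Measure.prod_smul_right, smul_smul,
    ← ENNReal.ofReal_mul (abs_nonneg _)]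

def upperHalfSpace (α : Type*) (c : ℝ) : Set (α × ℝ) := {x | c < x.2}

theorem measurableSet_upperHalfSpace {α : Type*} [MeasurableSpace α] (c : ℝ) :
    MeasurableSet (upperHalfSpace α c) :=
  measurableSet_lt measurable_const measurable_snd

theorem upperHalfSpace_antitone {α : Type*} : Antitone (upperHalfSpace α) :=
  fun _ _ h _ hx => h.trans_lt hx

theorem eventually_nhdsGT_mem_upperHalfSpace {α : Type*} {x : α × ℝ} {c : ℝ} (hx : c < x.2) :
    ∀ᶠ δ in 𝓝[>] c, x ∈ upperHalfSpace α δ :=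
  eventually_nhdsWithin_of_eventually_nhds (eventually_lt_nhds hx)

theorem eventually_atTop_notMem_upperHalfSpace {α : Type*} (x : α × ℝ) :
    ∀ᶠ c in atTop, x ∉ upperHalfSpace α c :=
  (eventually_ge_atTop x.2).mono fun _ hc => hc.not_gt

def halfSpaceDilation (k : ℕ) (τ s : ℝ) (y : En k) (x : En k × ℝ) : En k × ℝ :=
  (s ^ τ • (x.1 - y), s * x.2)

section Dilation

variable {k : ℕ} {τ s : ℝ} {y : En k}

theorem measurable_halfSpaceDilation : Measurable (halfSpaceDilation k τ s y) := by
  unfold halfSpaceDilation; fun_prop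

theorem map_halfSpaceDilation_volume (hs : 0 < s) :
    volume.map (halfSpaceDilation k τ s y) = ENNReal.ofReal (s ^ (-(τ * k + 1))) • volume := by
  rw [Measure.volume_eq_prod]
  refine (Measure.map_smul_sub_prod_mul volume (rpow_pos_of_pos hs τ).ne' hs.ne' y).trans ?_
  rw [finrank_euclideanSpace_fin]
  congr 2
  rw [abs_of_pos (by positivity), abs_of_pos (by positivity), ← Real.rpow_natCast,
    ← rpow_mul hs.le, ← rpow_neg hs.le, ← Real.rpow_neg_one, ← rpow_add hs, neg_add]

theorem preimage_halfSpaceDilation_upperHalfSpace (hs : 0 < s) (c : ℝ) :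
    halfSpaceDilation k τ s y ⁻¹' upperHalfSpace (En k) (s * c) = upperHalfSpace (En k) c := by
  ext x
  exact mul_lt_mul_iff_right₀ hs

end Dilation

section RSop

variable {k : ℕ} {p τ s : ℝ} {y η : En k} {u : En k × ℝ → ℂ}

theorem enorm_RSop (x : En k × ℝ) :
    ‖RSop k p τ y η s u x‖ₑ =
      ‖(((s ^ (τ * k / p + 1 / p) : ℝ) : ℂ) • (u ∘ halfSpaceDilation k τ s y)) x‖ₑ := by
  have hexp : ‖Complex.exp (Complex.I * s * (inner ℝ x.1 η : ℝ))‖ₑ = 1 := by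
    rw [mul_assoc, ← Complex.ofReal_mul, Complex.enorm_exp_I_mul_ofReal]
  simp only [RSop, enorm_mul, hexp, mul_one, Pi.smul_apply, Function.comp_apply, smul_eq_mul]
  rfl

theorem eLpNorm_RSop_restrict_upperHalfSpace (hp : 0 < p) (hs : 0 < s) {c : ℝ} (hc : 0 ≤ c)
    (hu : AEStronglyMeasurable u (volume.restrict (upperHalfSpace (En k) 0))) :
    eLpNorm (RSop k p τ y η s u) (ENNReal.ofReal p) (volume.restrict (upperHalfSpace (En k) c)) =
      eLpNorm u (ENNReal.ofReal p) (volume.restrict (upperHalfSpace (En k) (s * c))) := by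
  have hu' : AEStronglyMeasurable u (volume.restrict (upperHalfSpace (En k) (s * c))) :=
    hu.mono_measure (Measure.restrict_mono (upperHalfSpace_antitone (by positivity)) le_rfl)
  rw [eLpNorm_congr_enorm_ae (.of_forall enorm_RSop), eLpNorm_const_smul,
    ← preimage_halfSpaceDilation_upperHalfSpace hs c,
    eLpNorm_comp_restrict_preimage_of_map_eq_smul measurable_halfSpaceDilation
      (map_halfSpaceDilation_volume hs) (measurableSet_upperHalfSpace _) hu' ofReal_ne_top,
    ← mul_assoc]
  -- the prefactor `s ^ ((τ k + 1) / p)` cancels the `1/p`-th power of the Jacobian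
  rw [← ofReal_norm, Complex.norm_real, Real.norm_of_nonneg (by positivity), ENNReal.toReal_div,
    ENNReal.toReal_one, ENNReal.toReal_ofReal hp.le,
    ENNReal.ofReal_rpow_of_nonneg (by positivity) (by positivity),
    ← ENNReal.ofReal_mul (by positivity), ← rpow_mul hs.le, ← rpow_add hs,
    show τ * k / p + 1 / p + -(τ * k + 1) * (1 / p) = 0 by ring, Real.rpow_zero, ENNReal.ofReal_one,
    one_mul]

theorem aestronglyMeasurable_RSop (hs : 0 < s)
    (hu : AEStronglyMeasurable u (volume.restrict (upperHalfSpace (En k) 0))) :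
    AEStronglyMeasurable (RSop k p τ y η s u) (volume.restrict (upperHalfSpace (En k) 0)) := by
  rw [← mul_zero s] at hu
  have hcomp := hu.comp_restrict_preimage_of_map_eq_smul measurable_halfSpaceDilation
    (map_halfSpaceDilation_volume (τ := τ) (y := y) hs) (measurableSet_upperHalfSpace _)
  rw [preimage_halfSpaceDilation_upperHalfSpace hs] at hcomp
  have hfactor : Continuous fun x : En k × ℝ => ((s ^ (τ * k / p + 1 / p) : ℝ) : ℂ) *
      Complex.exp (Complex.I * s * (inner ℝ x.1 η : ℝ)) := by fun_prop
  exact hfactor.aestronglyMeasurable.mul hcomp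

theorem enorm_integral_RSop_mul_le {q : ℝ} (hpq : p.HolderConjugate q) (hs : 0 < s) {δ : ℝ}
    (hδ : 0 ≤ δ) {v : En k × ℝ → ℂ}
    (hu : AEStronglyMeasurable u (volume.restrict (upperHalfSpace (En k) 0)))
    (hv : AEStronglyMeasurable v (volume.restrict (upperHalfSpace (En k) 0))) :
    ‖∫ x in upperHalfSpace (En k) 0, RSop k p τ y η s u x * v x‖ₑ ≤
      eLpNorm u (.ofReal p) (volume.restrict (upperHalfSpace (En k) 0)) *
          eLpNorm v (.ofReal q)
            ((volume.restrict (upperHalfSpace (En k) 0)).restrict (upperHalfSpace (En k) δ)ᶜ) +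
        eLpNorm u (.ofReal p)
            ((volume.restrict (upperHalfSpace (En k) 0)).restrict (upperHalfSpace (En k) (s * δ))) *
          eLpNorm v (.ofReal q) (volume.restrict (upperHalfSpace (En k) 0)) := by
  have := hpq.ennrealOfReal
  set μ := volume.restrict (upperHalfSpace (En k) 0)
  set A := upperHalfSpace (En k) δ
  set f := RSop k p τ y η s u
  have hf : AEStronglyMeasurable f μ := aestronglyMeasurable_RSop hs hu
  have hrestrict : ∀ c : ℝ, 0 ≤ c →
      μ.restrict (upperHalfSpace (En k) c) = volume.restrict (upperHalfSpace (En k) c) :=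
    fun c hc => Measure.restrict_restrict_of_subset (upperHalfSpace_antitone hc)
  have hnear : eLpNorm f (.ofReal p) (μ.restrict Aᶜ) ≤ eLpNorm u (.ofReal p) μ := by
    calc eLpNorm f (.ofReal p) (μ.restrict Aᶜ) ≤ eLpNorm f (.ofReal p) μ :=
          eLpNorm_mono_measure _ Measure.restrict_le_self
      _ = eLpNorm u (.ofReal p) μ := by
          simpa using eLpNorm_RSop_restrict_upperHalfSpace hpq.pos hs le_rfl hu
  have hfar : eLpNorm f (.ofReal p) (μ.restrict A) =
      eLpNorm u (.ofReal p) (μ.restrict (upperHalfSpace (En k) (s * δ))) := by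
    rw [hrestrict δ hδ, hrestrict _ (by positivity),
      eLpNorm_RSop_restrict_upperHalfSpace hpq.pos hs hδ hu]
  calc ‖∫ x, f x * v x ∂μ‖ₑ ≤ ∫⁻ x, ‖f x * v x‖ₑ ∂μ := enorm_integral_le_lintegral_enorm _
    _ = ∫⁻ x in Aᶜ, ‖f x * v x‖ₑ ∂μ + ∫⁻ x in A, ‖f x * v x‖ₑ ∂μ := by
        rw [add_comm, lintegral_add_compl _ (measurableSet_upperHalfSpace δ)]
    _ ≤ eLpNorm f (.ofReal p) (μ.restrict Aᶜ) * eLpNorm v (.ofReal q) (μ.restrict Aᶜ) +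
          eLpNorm f (.ofReal p) (μ.restrict A) * eLpNorm v (.ofReal q) (μ.restrict A) :=
        add_le_add (lintegral_enorm_mul_le_eLpNorm_mul_eLpNorm hf.restrict hv.restrict)
          (lintegral_enorm_mul_le_eLpNorm_mul_eLpNorm hf.restrict hv.restrict)
    _ ≤ _ := add_le_add (mul_le_mul_left hnear _)
        (mul_le_mul' hfar.le (eLpNorm_mono_measure _ Measure.restrict_le_self))

end RSop

theorem statement_12_general (k : ℕ) (p q τ : ℝ) (hp : 1 < p) (hpq : 1 / p + 1 / q = 1)
    (y η : En k)
    (u v : En k × ℝ → ℂ)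
    (hu : MemLp u (ENNReal.ofReal p) (volume.restrict {q : En k × ℝ | 0 < q.2}))
    (hv : MemLp v (ENNReal.ofReal q) (volume.restrict {q : En k × ℝ | 0 < q.2})) :
    Tendsto
      (fun s : ℝ => ∫ x in {q : En k × ℝ | 0 < q.2}, RSop k p τ y η s u x * v x)
      atTop (𝓝 0) := by
  have hpq' : p.HolderConjugate q :=
    Real.holderConjugate_iff.mpr ⟨hp, by simpa only [one_div] using hpq⟩
  set μ := volume.restrict (upperHalfSpace (En k) 0)
  replace hu : MemLp u (.ofReal p) μ := hu
  replace hv : MemLp v (.ofReal q) μ := hv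
  have hnear : Tendsto (fun δ => eLpNorm v (.ofReal q) (μ.restrict (upperHalfSpace (En k) δ)ᶜ))
      (𝓝[>] 0) (𝓝 0) :=
    hv.tendsto_eLpNorm_restrict_zero ofReal_ne_top
      (fun δ => (measurableSet_upperHalfSpace δ).compl)
      ((ae_restrict_mem (measurableSet_upperHalfSpace 0)).mono fun x hx =>
        (eventually_nhdsGT_mem_upperHalfSpace hx).mono fun _ h => not_not_intro h)
  have hfar : Tendsto (fun c => eLpNorm u (.ofReal p) (μ.restrict (upperHalfSpace (En k) c)))
      atTop (𝓝 0) :=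
    hu.tendsto_eLpNorm_restrict_zero ofReal_ne_top measurableSet_upperHalfSpace
      (ae_of_all _ eventually_atTop_notMem_upperHalfSpace)
  rw [tendsto_zero_iff_enorm_tendsto_zero]
  refine ENNReal.tendsto_atTop_zero_of_le_add_comp_mul
    (a := fun δ => eLpNorm u _ μ * eLpNorm v _ (μ.restrict (upperHalfSpace (En k) δ)ᶜ))
    (b := fun c => eLpNorm u _ (μ.restrict (upperHalfSpace (En k) c)) * eLpNorm v _ μ) ?_ ?_
    fun s hs δ hδ => enorm_integral_RSop_mul_le hpq' hs hδ.le hu.1 hv.1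
  · simpa using ENNReal.Tendsto.const_mul hnear (Or.inr hu.eLpNorm_ne_top)
  · simpa using ENNReal.Tendsto.mul_const hfar (Or.inr hv.eLpNorm_ne_top)

theorem statement_12 (k : ℕ) (p q τ : ℝ) (hp : 1 < p) (hpq : 1 / p + 1 / q = 1)
    (hτ : 0 < τ) (hτ3 : τ < 1 / 3) (y η : En k)
    (u v : En k × ℝ → ℂ)
    (hu : MemLp u (ENNReal.ofReal p) (volume.restrict {q : En k × ℝ | 0 < q.2}))
    (hv : MemLp v (ENNReal.ofReal q) (volume.restrict {q : En k × ℝ | 0 < q.2})) :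
    Tendsto
      (fun s : ℝ => ∫ x in {q : En k × ℝ | 0 < q.2}, RSop k p τ y η s u x * v x)
      atTop (𝓝 0) :=
  statement_12_general k p q τ hp hpq y η u v hu hv
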